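/- arXiv:1911.11584 — 2 statements merged into one kernel-verified Lean document; each statement's English description precedes it below -/
import Mathlib

section
/- For every partial isomorphism h between property graphs G1 and G2, the canonical edit script induced by h — which deletes all properties on unmatched objects of G1 and all properties of matched objects having no equal counterpart under h, deletes all unmatched edges and then all unmatched nodes of G1, updates each matched property whose values differ, then inserts all unmatched nodes of G2, all unmatched edges of G2, and all properties of G2 not already accounted for — is a valid edit script whose length is exactly cost(h) and which maps G1 to a graph isomorphic to G2. Consequently GED(G1,G2) ≤ cost(h). -/
/-!
Property graphs, homomorphisms/isomorphisms/subgraphs, edit operations,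
edit scripts, canonical scripts, graph edit distance, partial isomorphisms
and their cost, and the edit-script rewriting system of the paper
"Flexible graph matching and graph edit distance using answer set programming".
-/

universe u v w z

variable {ι : Type u} {L : Type v} {K : Type w} {D : Type z}

/-- A raw property-graph structure: finite sets of node and edge identifiers,
partial source/target/label functions (modelled via `Option`), and a partial
key-value property assignment. -/
structure PreGraph (ι : Type u) (L : Type v) (K : Type w) (D : Type z) where
  V : Finset ι
  E : Finset ι
  src : ι → Option ι
  tgt : ι → Option ι
  lab : ι → Option L
  prop : ι → K → Option D

section Graphs

variable [DecidableEq ι]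

/-- The invariants making a raw structure an actual property graph:
nodes and edges are disjoint, sources and targets are defined exactly on
edges and map into the node set, labels are defined exactly on nodes and
edges, and properties are defined only on nodes and edges. -/
structure IsPGraph (G : PreGraph ι L K D) : Prop where
  disj : Disjoint G.V G.E
  src_dom : ∀ e, (G.src e).isSome ↔ e ∈ G.E
  tgt_dom : ∀ e, (G.tgt e).isSome ↔ e ∈ G.E
  src_mem : ∀ e v, G.src e = some v → v ∈ G.V
  tgt_mem : ∀ e v, G.tgt e = some v → v ∈ G.V
  lab_dom : ∀ x, (G.lab x).isSome ↔ x ∈ G.V ∪ G.E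
  prop_dom : ∀ x k, (G.prop x k).isSome → x ∈ G.V ∪ G.E

/-- A homomorphism of property graphs (represented by a total function on
identifiers): maps nodes to nodes and edges to edges preserving labels,
sources, targets, and all defined properties. -/
structure IsHom (G1 G2 : PreGraph ι L K D) (h : ι → ι) : Prop where
  map_V : ∀ v ∈ G1.V, h v ∈ G2.V
  map_E : ∀ e ∈ G1.E, h e ∈ G2.E
  lab_eq : ∀ x ∈ G1.V ∪ G1.E, G2.lab (h x) = G1.lab x
  src_eq : ∀ e ∈ G1.E, ∀ v, G1.src e = some v → G2.src (h e) = some (h v)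
  tgt_eq : ∀ e ∈ G1.E, ∀ v, G1.tgt e = some v → G2.tgt (h e) = some (h v)
  prop_eq : ∀ x ∈ G1.V ∪ G1.E, ∀ k d, G1.prop x k = some d → G2.prop (h x) k = some d

/-- An isomorphism of property graphs: an invertible homomorphism whose
inverse is also a homomorphism. -/
def IsIso (G1 G2 : PreGraph ι L K D) (h : ι → ι) : Prop :=
  IsHom G1 G2 h ∧ ∃ g : ι → ι, IsHom G2 G1 g ∧
    (∀ x ∈ G1.V ∪ G1.E, g (h x) = x) ∧ (∀ y ∈ G2.V ∪ G2.E, h (g y) = y)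

/-- `G'` is a subgraph of `G`: `G'` is itself a property graph, its nodes and
edges are among those of `G`, and sources, targets, labels and defined
properties agree with those of `G`. -/
def IsSubgraph (G' G : PreGraph ι L K D) : Prop :=
  IsPGraph G' ∧ G'.V ⊆ G.V ∧ G'.E ⊆ G.E ∧
  (∀ e ∈ G'.E, G'.src e = G.src e ∧ G'.tgt e = G.tgt e) ∧
  (∀ x ∈ G'.V ∪ G'.E, G'.lab x = G.lab x) ∧
  (∀ x k d, G'.prop x k = some d → G.prop x k = some d)

end Graphs

/-- The seven edit operations on property graphs. -/
inductive EditOp (ι : Type u) (L : Type v) (K : Type w) (D : Type z) where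
  | insV (v : ι) (l : L)
  | insE (e v w : ι) (l : L)
  | insP (x : ι) (k : K) (d : D)
  | delV (v : ι)
  | delE (e : ι)
  | delP (x : ι) (k : K)
  | updP (x : ι) (k : K) (d : D)

section Edits

variable [DecidableEq ι] [DecidableEq K]

/-- The precondition of an edit operation on a graph. -/
def Applicable (op : EditOp ι L K D) (G : PreGraph ι L K D) : Prop :=
  match op with
  | .insV v _ => v ∉ G.V ∪ G.E
  | .insE e v w _ => v ∈ G.V ∧ w ∈ G.V ∧ e ∉ G.V ∪ G.E
  | .insP x k _ => x ∈ G.V ∪ G.E ∧ G.prop x k = none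
  | .delV v => v ∈ G.V ∧ (∀ e ∈ G.E, G.src e ≠ some v ∧ G.tgt e ≠ some v) ∧
      (∀ k, G.prop v k = none)
  | .delE e => e ∈ G.E ∧ (∀ k, G.prop e k = none)
  | .delP x k => (G.prop x k).isSome
  | .updP x k _ => (G.prop x k).isSome

/-- The effect of an edit operation on a graph. -/
def applyOp (op : EditOp ι L K D) (G : PreGraph ι L K D) : PreGraph ι L K D :=
  match op with
  | .insV v l =>
      { G with
        V := (insert v G.V)
        lab := fun x => if x = v then some l else G.lab x }
  | .insE e v w l =>
      { G with
        E := (insert e G.E)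
        src := fun x => if x = e then some v else G.src x
        tgt := fun x => if x = e then some w else G.tgt x
        lab := fun x => if x = e then some l else G.lab x }
  | .insP x k d =>
      { G with prop := fun y k' => if y = x ∧ k' = k then some d else G.prop y k' }
  | .delV v =>
      { G with
        V := (G.V.erase v)
        lab := fun x => if x = v then none else G.lab x }
  | .delE e =>
      { G with
        E := (G.E.erase e)
        src := fun x => if x = e then none else G.src x
        tgt := fun x => if x = e then none else G.tgt x
        lab := fun x => if x = e then none else G.lab x }
  | .delP x k =>
      { G with prop := fun y k' => if y = x ∧ k' = k then none else G.prop y k' }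
  | .updP x k d =>
      { G with prop := fun y k' => if y = x ∧ k' = k then some d else G.prop y k' }

/-- An edit script is valid on `G` if each operation is applicable in the
graph produced by the preceding ones. -/
inductive ValidScript : PreGraph ι L K D → List (EditOp ι L K D) → Prop where
  | nil (G : PreGraph ι L K D) : ValidScript G []
  | cons {G : PreGraph ι L K D} {op : EditOp ι L K D} {ops : List (EditOp ι L K D)} :
      Applicable op G → ValidScript (applyOp op G) ops → ValidScript G (op :: ops)

/-- The result `ops(G)` of applying an edit script in order. -/
def applyScript (ops : List (EditOp ι L K D)) (G : PreGraph ι L K D) : PreGraph ι L K D :=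
  ops.foldl (fun g op => applyOp op g) G

/-- A canonical edit script: property deletions, then edge deletions, then
node deletions, then property updates, then node insertions, then edge
insertions, then property insertions. -/
def Canonical (ops : List (EditOp ι L K D)) : Prop :=
  ∃ dp de dv up iv ie ip : List (EditOp ι L K D),
    ops = dp ++ de ++ dv ++ up ++ iv ++ ie ++ ip ∧
    (∀ op ∈ dp, ∃ x k, op = EditOp.delP x k) ∧
    (∀ op ∈ de, ∃ e, op = EditOp.delE e) ∧
    (∀ op ∈ dv, ∃ v, op = EditOp.delV v) ∧
    (∀ op ∈ up, ∃ x k d, op = EditOp.updP x k d) ∧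
    (∀ op ∈ iv, ∃ v l, op = EditOp.insV v l) ∧
    (∀ op ∈ ie, ∃ e v w l, op = EditOp.insE e v w l) ∧
    (∀ op ∈ ip, ∃ x k d, op = EditOp.insP x k d)

/-- The set of lengths of valid edit scripts transforming `G1` into a graph
isomorphic to `G2`. -/
def GEDSet (G1 G2 : PreGraph ι L K D) : Set ℕ :=
  {n | ∃ ops : List (EditOp ι L K D), ValidScript G1 ops ∧
        (∃ f : ι → ι, IsIso (applyScript ops G1) G2 f) ∧ ops.length = n}

/-- The graph edit distance: the minimum length of a valid edit script
transforming `G1` into a graph isomorphic to `G2`. -/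
noncomputable def GED (G1 G2 : PreGraph ι L K D) : ℕ :=
  sInf (GEDSet G1 G2)

/-- The number of defined properties of a graph. -/
def propCount [Fintype K] (G : PreGraph ι L K D) : ℕ :=
  ∑ x ∈ G.V ∪ G.E, (Finset.univ.filter fun k : K => (G.prop x k).isSome).card

end Edits

/-- A possibly-marked edit operation: the boolean records whether the
operation is marked (`op*`). -/
abbrev MOp (ι : Type u) (L : Type v) (K : Type w) (D : Type z) :=
  EditOp ι L K D × Bool

/-- The edit-script rewrite rules of Figure 5 of the paper, acting on the
marked operation and the operation immediately following it. -/
inductive RewStep : List (MOp ι L K D) → List (MOp ι L K D) → Prop where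
  | delE_delP (e x : ι) (k : K) :
      RewStep [(.delE e, true), (.delP x k, false)] [(.delP x k, false), (.delE e, true)]
  | delV_delP (v x : ι) (k : K) :
      RewStep [(.delV v, true), (.delP x k, false)] [(.delP x k, false), (.delV v, true)]
  | delV_delE (v e : ι) :
      RewStep [(.delV v, true), (.delE e, false)] [(.delE e, false), (.delV v, true)]
  | updP_delP_same (x : ι) (k : K) (d : D) :
      RewStep [(.updP x k d, true), (.delP x k, false)] [(.delP x k, false)]
  | updP_delP_ne (x y : ι) (k k' : K) (d : D) (h : ¬(x = y ∧ k = k')) :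
      RewStep [(.updP x k d, true), (.delP y k', false)]
        [(.delP y k', false), (.updP x k d, true)]
  | updP_delE (x : ι) (k : K) (d : D) (e : ι) :
      RewStep [(.updP x k d, true), (.delE e, false)] [(.delE e, false), (.updP x k d, true)]
  | updP_delV (x : ι) (k : K) (d : D) (v : ι) :
      RewStep [(.updP x k d, true), (.delV v, false)] [(.delV v, false), (.updP x k d, true)]
  | insV_delP (v : ι) (l : L) (x : ι) (k : K) :
      RewStep [(.insV v l, true), (.delP x k, false)] [(.delP x k, false), (.insV v l, true)]
  | insV_delE (v : ι) (l : L) (e : ι) :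
      RewStep [(.insV v l, true), (.delE e, false)] [(.delE e, false), (.insV v l, true)]
  | insV_delV_same (v : ι) (l : L) :
      RewStep [(.insV v l, true), (.delV v, false)] []
  | insV_delV_ne (v : ι) (l : L) (v' : ι) (h : v ≠ v') :
      RewStep [(.insV v l, true), (.delV v', false)] [(.delV v', false), (.insV v l, true)]
  | insV_updP (v : ι) (l : L) (x : ι) (k : K) (d : D) :
      RewStep [(.insV v l, true), (.updP x k d, false)]
        [(.updP x k d, false), (.insV v l, true)]
  | insE_delP (e v w : ι) (l : L) (x : ι) (k : K) :
      RewStep [(.insE e v w l, true), (.delP x k, false)]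
        [(.delP x k, false), (.insE e v w l, true)]
  | insE_delE_same (e v w : ι) (l : L) :
      RewStep [(.insE e v w l, true), (.delE e, false)] []
  | insE_delE_ne (e v w : ι) (l : L) (e' : ι) (h : e ≠ e') :
      RewStep [(.insE e v w l, true), (.delE e', false)]
        [(.delE e', false), (.insE e v w l, true)]
  | insE_delV (e v w : ι) (l : L) (v' : ι) :
      RewStep [(.insE e v w l, true), (.delV v', false)]
        [(.delV v', false), (.insE e v w l, true)]
  | insE_updP (e v w : ι) (l : L) (x : ι) (k : K) (d : D) :
      RewStep [(.insE e v w l, true), (.updP x k d, false)]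
        [(.updP x k d, false), (.insE e v w l, true)]
  | insE_insV (e v w : ι) (l : L) (v' : ι) (l' : L) :
      RewStep [(.insE e v w l, true), (.insV v' l', false)]
        [(.insV v' l', false), (.insE e v w l, true)]
  | insP_delP_same (x : ι) (k : K) (d : D) :
      RewStep [(.insP x k d, true), (.delP x k, false)] []
  | insP_delP_ne (x y : ι) (k k' : K) (d : D) (h : ¬(x = y ∧ k = k')) :
      RewStep [(.insP x k d, true), (.delP y k', false)]
        [(.delP y k', false), (.insP x k d, true)]
  | insP_delE (x : ι) (k : K) (d : D) (e : ι) :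
      RewStep [(.insP x k d, true), (.delE e, false)] [(.delE e, false), (.insP x k d, true)]
  | insP_delV (x : ι) (k : K) (d : D) (v : ι) :
      RewStep [(.insP x k d, true), (.delV v, false)] [(.delV v, false), (.insP x k d, true)]
  | insP_updP_same (x : ι) (k : K) (d d' : D) :
      RewStep [(.insP x k d, true), (.updP x k d', false)] [(.insP x k d', true)]
  | insP_updP_ne (x y : ι) (k k' : K) (d d' : D) (h : ¬(x = y ∧ k = k')) :
      RewStep [(.insP x k d, true), (.updP y k' d', false)]
        [(.updP y k' d', false), (.insP x k d, true)]
  | insP_insV (x : ι) (k : K) (d : D) (v : ι) (l : L) :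
      RewStep [(.insP x k d, true), (.insV v l, false)] [(.insV v l, false), (.insP x k d, true)]
  | insP_insE (x : ι) (k : K) (d : D) (e v w : ι) (l : L) :
      RewStep [(.insP x k d, true), (.insE e v w l, false)]
        [(.insE e v w l, false), (.insP x k d, true)]
  | unmark (op : EditOp ι L K D) :
      RewStep [(op, true)] [(op, false)]

/-- One rewrite step on a marked edit script: apply one of the rules at the
position of the marked operation (everything before it is unmarked). -/
def Rew (m m' : List (MOp ι L K D)) : Prop :=
  ∃ pre a b post : List (MOp ι L K D),
    (∀ p ∈ pre, p.2 = false) ∧ RewStep a b ∧ m = pre ++ a ++ post ∧ m' = pre ++ b ++ post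

/-- The `*`-length of a marked script: the length of the suffix beginning at
the (first) marked operation, or `0` if there is none. -/
def starLen : List (MOp ι L K D) → ℕ
  | [] => 0
  | (_, b) :: rest => if b then rest.length + 1 else starLen rest

section PartialIso

variable [DecidableEq ι]

/-- A partial isomorphism between two property graphs, represented as a
partial map on identifiers: injective, matching nodes to nodes and edges to
edges with equal labels, and matching the endpoints of matched edges. -/
def IsPartialIso (G1 G2 : PreGraph ι L K D) (h : ι → Option ι) : Prop :=
  (∀ x y, h x = some y → (x ∈ G1.V ∧ y ∈ G2.V) ∨ (x ∈ G1.E ∧ y ∈ G2.E)) ∧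
  (∀ x x' y, h x = some y → h x' = some y → x = x') ∧
  (∀ x y, h x = some y → G2.lab y = G1.lab x) ∧
  (∀ e e' v, h e = some e' → G1.src e = some v → h v = G2.src e') ∧
  (∀ e e' v, h e = some e' → G1.tgt e = some v → h v = G2.tgt e')

/-- The nodes and edges of `G1` left unmatched by `h`. -/
def unmatchedL (G1 : PreGraph ι L K D) (h : ι → Option ι) : Finset ι :=
  (G1.V ∪ G1.E).filter fun x => h x = none

/-- The nodes and edges of `G2` left unmatched by `h`. -/
def unmatchedR (G1 G2 : PreGraph ι L K D) (h : ι → Option ι) : Finset ι :=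
  (G2.V ∪ G2.E).filter fun y => ∀ x ∈ G1.V ∪ G1.E, h x ≠ some y

/-- The number of defined properties on a given object of a graph. -/
def propsOn [Fintype K] (G : PreGraph ι L K D) (x : ι) : ℕ :=
  (Finset.univ.filter fun k : K => (G.prop x k).isSome).card

/-- The number of keys at which the properties of a matched pair disagree
(defined with different values, or defined on only one side). -/
def mismatchCount [Fintype K] [DecidableEq D] (G1 G2 : PreGraph ι L K D) (x y : ι) : ℕ :=
  (Finset.univ.filter fun k : K => G1.prop x k ≠ G2.prop y k).card

/-- The cost of a partial isomorphism: unmatched nodes and edges on both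
sides, mismatched properties of matched pairs, and all properties on
unmatched objects of both sides. -/
def pisoCost [Fintype K] [DecidableEq D] (G1 G2 : PreGraph ι L K D) (h : ι → Option ι) : ℕ :=
  (unmatchedL G1 h).card + (unmatchedR G1 G2 h).card +
  (∑ x ∈ G1.V ∪ G1.E, (h x).elim 0 fun y => mismatchCount G1 G2 x y) +
  (∑ x ∈ unmatchedL G1 h, propsOn G1 x) +
  (∑ y ∈ unmatchedR G1 G2 h, propsOn G2 y)

end PartialIso

/-!
The script is read off `h`. Every object `x` of `G1` must end up carrying the properties of
its image in `G2`, and an unmatched object of `G2` is inserted under its own identifier (the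
identifiers of the two graphs are disjoint), with the endpoints of inserted edges pulled back
along `h`. So one edit is spent per unmatched object of either graph and one per key at which
the property of an object differs from the one it must end with; these are exactly the
summands of `cost h`. Deleting properties first, then unmatched edges and nodes, makes every
deletion applicable, and inserting nodes before edges before properties does the same for the
insertions. The resulting graph is isomorphic to `G2` through the map sending a matched object
to its image and fixing the inserted ones.
-/

section Scripts

def delPScript (ks : List (ι × K)) : List (EditOp ι L K D) :=
  ks.map fun p => .delP p.1 p.2

def setPScript (mk : ι → K → D → EditOp ι L K D) (P : ι → K → Option D)
    (ks : List (ι × K)) : List (EditOp ι L K D) :=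
  ks.filterMap fun p => (P p.1 p.2).map (mk p.1 p.2)

def delEScript (es : List ι) : List (EditOp ι L K D) := es.map .delE

def delVScript (vs : List ι) : List (EditOp ι L K D) := vs.map .delV

def insVScript (H : PreGraph ι L K D) (vs : List ι) : List (EditOp ι L K D) :=
  vs.filterMap fun v => (H.lab v).map (.insV v)

def insEScript (H : PreGraph ι L K D) (π : ι → ι) (es : List ι) : List (EditOp ι L K D) :=
  es.filterMap fun e =>
    match H.src e, H.tgt e, H.lab e with
    | some a, some b, some l => some (.insE e (π a) (π b) l)
    | _, _, _ => none

theorem length_setPScript (mk : ι → K → D → EditOp ι L K D) {P : ι → K → Option D}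
    {ks : List (ι × K)} (hP : ∀ p ∈ ks, (P p.1 p.2).isSome) :
    (setPScript mk P ks).length = ks.length := by
  simpa [setPScript, List.length_filterMap_eq_countP] using hP

theorem length_insVScript {H : PreGraph ι L K D} {vs : List ι}
    (hvs : ∀ v ∈ vs, (H.lab v).isSome) : (insVScript H vs).length = vs.length := by
  simpa [insVScript, List.length_filterMap_eq_countP] using hvs

theorem length_insEScript {H : PreGraph ι L K D} {π : ι → ι} {es : List ι}
    (hes : ∀ e ∈ es, (H.src e).isSome ∧ (H.tgt e).isSome ∧ (H.lab e).isSome) :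
    (insEScript H π es).length = es.length := by
  rw [insEScript, List.length_filterMap_eq_countP, List.countP_eq_length]
  intro e he
  obtain ⟨hs, ht, hl⟩ := hes e he
  obtain ⟨a, ha⟩ := Option.isSome_iff_exists.mp hs
  obtain ⟨b, hb⟩ := Option.isSome_iff_exists.mp ht
  obtain ⟨l, hl⟩ := Option.isSome_iff_exists.mp hl
  simp [ha, hb, hl]

variable [DecidableEq ι] [DecidableEq K]

theorem applyScript_append (a b : List (EditOp ι L K D)) (G : PreGraph ι L K D) :
    applyScript (a ++ b) G = applyScript b (applyScript a G) :=
  List.foldl_append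

theorem ValidScript.append {G : PreGraph ι L K D} {a b : List (EditOp ι L K D)}
    (ha : ValidScript G a) (hb : ValidScript (applyScript a G) b) : ValidScript G (a ++ b) := by
  induction ha with
  | nil => exact hb
  | cons hop _ ih => exact .cons hop (ih hb)

theorem applyScript_delPScript (ks : List (ι × K)) (G : PreGraph ι L K D) :
    applyScript (delPScript ks) G =
      { G with prop := fun x k => if (x, k) ∈ ks then none else G.prop x k } := by
  induction ks generalizing G with
  | nil => rfl
  | cons p ks ih =>
    refine (ih _).trans ?_
    simp only [applyOp, List.mem_cons, PreGraph.mk.injEq, true_and]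
    funext x k
    by_cases hp : (x, k) = p <;> grind

-- `updP` and `insP` act identically, so this describes both the update and the insertion phase.
theorem applyScript_setPScript {mk : ι → K → D → EditOp ι L K D}
    (hmk : ∀ x k d G, applyOp (mk x k d) G = applyOp (.updP x k d) G)
    {P : ι → K → Option D} {ks : List (ι × K)} (hP : ∀ p ∈ ks, (P p.1 p.2).isSome)
    (G : PreGraph ι L K D) :
    applyScript (setPScript mk P ks) G =
      { G with prop := fun x k => if (x, k) ∈ ks then P x k else G.prop x k } := by
  induction ks generalizing G with
  | nil => rfl
  | cons p ks ih =>
    obtain ⟨d, hd⟩ := Option.isSome_iff_exists.mp (hP p List.mem_cons_self)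
    rw [setPScript, List.filterMap_cons, hd, Option.map_some]
    change applyScript (setPScript mk P ks) (applyOp (mk p.1 p.2 d) G) = _
    rw [hmk, ih fun q hq => hP q (List.mem_cons_of_mem _ hq)]
    simp only [applyOp, List.mem_cons, PreGraph.mk.injEq, true_and]
    funext x k
    by_cases hp : (x, k) = p <;> grind

theorem validScript_delPScript {ks : List (ι × K)} (hks : ks.Nodup) {G : PreGraph ι L K D}
    (hdef : ∀ p ∈ ks, (G.prop p.1 p.2).isSome) : ValidScript G (delPScript ks) := by
  induction ks generalizing G with
  | nil => exact .nil G
  | cons p ks ih =>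
    refine .cons (hdef p List.mem_cons_self) (ih hks.of_cons fun q hq => ?_)
    have hqp : q ≠ p := fun h => (List.nodup_cons.mp hks).1 (h ▸ hq)
    simpa [applyOp, ← Prod.ext_iff, hqp] using hdef q (List.mem_cons_of_mem _ hq)

theorem validScript_setPScript_updP {P : ι → K → Option D} {ks : List (ι × K)}
    {G : PreGraph ι L K D} (hdef : ∀ p ∈ ks, (G.prop p.1 p.2).isSome) :
    ValidScript G (setPScript .updP P ks) := by
  induction ks generalizing G with
  | nil => exact .nil G
  | cons p ks ih =>
    cases hP : P p.1 p.2 with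
    | none => simpa [setPScript, hP] using ih fun q hq => hdef q (List.mem_cons_of_mem _ hq)
    | some d =>
      simp only [setPScript, List.filterMap_cons, hP, Option.map_some]
      refine .cons (hdef p List.mem_cons_self) (ih fun q hq => ?_)
      by_cases hqp : q.1 = p.1 ∧ q.2 = p.2
      · simp [applyOp, hqp]
      · simpa [applyOp, hqp] using hdef q (List.mem_cons_of_mem _ hq)

theorem validScript_setPScript_insP {P : ι → K → Option D} {ks : List (ι × K)}
    (hks : ks.Nodup)
    {G : PreGraph ι L K D} (hdef : ∀ p ∈ ks, p.1 ∈ G.V ∪ G.E ∧ G.prop p.1 p.2 = none) :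
    ValidScript G (setPScript .insP P ks) := by
  induction ks generalizing G with
  | nil => exact .nil G
  | cons p ks ih =>
    have htail : ∀ G' : PreGraph ι L K D, G'.V = G.V → G'.E = G.E →
        (∀ q ∈ ks, G'.prop q.1 q.2 = G.prop q.1 q.2) →
        ValidScript G' (setPScript .insP P ks) :=
      fun G' hV hE hprop => ih hks.of_cons fun q hq => by
        rw [hV, hE, hprop q hq]; exact hdef q (List.mem_cons_of_mem _ hq)
    cases hP : P p.1 p.2 with
    | none => simpa [setPScript, hP] using htail G rfl rfl fun _ _ => rfl
    | some d =>
      simp only [setPScript, List.filterMap_cons, hP, Option.map_some]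
      refine .cons (hdef p List.mem_cons_self) (htail _ rfl rfl fun q hq => ?_)
      have hqp : q ≠ p := fun h => (List.nodup_cons.mp hks).1 (h ▸ hq)
      simp [applyOp, ← Prod.ext_iff, hqp]

theorem applyScript_delEScript (es : List ι) (G : PreGraph ι L K D) :
    applyScript (delEScript es) G =
      { G with
        E := G.E.filter (· ∉ es)
        src := fun x => if x ∈ es then none else G.src x
        tgt := fun x => if x ∈ es then none else G.tgt x
        lab := fun x => if x ∈ es then none else G.lab x } := by
  induction es generalizing G with
  | nil => simp [delEScript, applyScript]
  | cons e es ih =>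
    refine (ih _).trans ?_
    simp only [applyOp, List.mem_cons, PreGraph.mk.injEq, true_and, and_true]
    refine ⟨by ext; simp; tauto, ?_, ?_, ?_⟩ <;> funext x <;> grind

theorem applyScript_delVScript (vs : List ι) (G : PreGraph ι L K D) :
    applyScript (delVScript vs) G =
      { G with
        V := G.V.filter (· ∉ vs)
        lab := fun x => if x ∈ vs then none else G.lab x } := by
  induction vs generalizing G with
  | nil => simp [delVScript, applyScript]
  | cons v vs ih =>
    refine (ih _).trans ?_
    simp only [applyOp, List.mem_cons, PreGraph.mk.injEq, true_and, and_true]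
    refine ⟨by ext; simp; tauto, ?_⟩
    funext x
    grind

theorem applyScript_insVScript {H : PreGraph ι L K D} {vs : List ι}
    (hvs : ∀ v ∈ vs, (H.lab v).isSome) (G : PreGraph ι L K D) :
    applyScript (insVScript H vs) G =
      { G with
        V := G.V ∪ vs.toFinset
        lab := fun x => if x ∈ vs then H.lab x else G.lab x } := by
  induction vs generalizing G with
  | nil => simp [insVScript, applyScript]
  | cons v vs ih =>
    obtain ⟨l, hl⟩ := Option.isSome_iff_exists.mp (hvs v List.mem_cons_self)
    rw [insVScript, List.filterMap_cons, hl, Option.map_some]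
    change applyScript (insVScript H vs) (applyOp (.insV v l) G) = _
    rw [ih fun w hw => hvs w (List.mem_cons_of_mem _ hw)]
    simp only [applyOp, List.mem_cons, PreGraph.mk.injEq, true_and, and_true]
    refine ⟨by ext; simp, ?_⟩
    funext x
    grind

theorem applyScript_insEScript {H : PreGraph ι L K D} {π : ι → ι} {es : List ι}
    (hes : ∀ e ∈ es, (H.src e).isSome ∧ (H.tgt e).isSome ∧ (H.lab e).isSome)
    (G : PreGraph ι L K D) :
    applyScript (insEScript H π es) G =
      { G with
        E := G.E ∪ es.toFinset
        src := fun x => if x ∈ es then (H.src x).map π else G.src x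
        tgt := fun x => if x ∈ es then (H.tgt x).map π else G.tgt x
        lab := fun x => if x ∈ es then H.lab x else G.lab x } := by
  induction es generalizing G with
  | nil => simp [insEScript, applyScript]
  | cons e es ih =>
    obtain ⟨hs, ht, hl⟩ := hes e List.mem_cons_self
    obtain ⟨a, ha⟩ := Option.isSome_iff_exists.mp hs
    obtain ⟨b, hb⟩ := Option.isSome_iff_exists.mp ht
    obtain ⟨l, hl⟩ := Option.isSome_iff_exists.mp hl
    rw [insEScript, List.filterMap_cons]
    simp only [ha, hb, hl]
    change applyScript (insEScript H π es) (applyOp (.insE e (π a) (π b) l) G) = _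
    rw [ih fun w hw => hes w (List.mem_cons_of_mem _ hw)]
    simp only [applyOp, List.mem_cons, PreGraph.mk.injEq, true_and, and_true]
    refine ⟨by ext; simp, ?_, ?_, ?_⟩ <;> funext x <;> grind

theorem validScript_delEScript {es : List ι} (hes : es.Nodup) {G : PreGraph ι L K D}
    (hdel : ∀ e ∈ es, e ∈ G.E ∧ ∀ k, G.prop e k = none) :
    ValidScript G (delEScript es) := by
  induction es generalizing G with
  | nil => exact .nil G
  | cons e es ih =>
    refine .cons (hdel e List.mem_cons_self) (ih hes.of_cons fun q hq => ?_)
    have hqe : q ≠ e := fun h => (List.nodup_cons.mp hes).1 (h ▸ hq)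
    simpa [applyOp, hqe] using hdel q (List.mem_cons_of_mem _ hq)

theorem validScript_delVScript {vs : List ι} (hvs : vs.Nodup) {G : PreGraph ι L K D}
    (hdel : ∀ v ∈ vs, v ∈ G.V ∧ (∀ e ∈ G.E, G.src e ≠ some v ∧ G.tgt e ≠ some v) ∧
      ∀ k, G.prop v k = none) : ValidScript G (delVScript vs) := by
  induction vs generalizing G with
  | nil => exact .nil G
  | cons v vs ih =>
    refine .cons (hdel v List.mem_cons_self) (ih hvs.of_cons fun q hq => ?_)
    have hqv : q ≠ v := fun h => (List.nodup_cons.mp hvs).1 (h ▸ hq)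
    simpa [applyOp, hqv] using hdel q (List.mem_cons_of_mem _ hq)

theorem validScript_insVScript (H : PreGraph ι L K D) {vs : List ι} (hvs : vs.Nodup)
    {G : PreGraph ι L K D} (hfresh : ∀ v ∈ vs, v ∉ G.V ∪ G.E) :
    ValidScript G (insVScript H vs) := by
  induction vs generalizing G with
  | nil => exact .nil G
  | cons v vs ih =>
    cases hl : H.lab v with
    | none =>
      simpa [insVScript, hl] using ih hvs.of_cons fun q hq => hfresh q (List.mem_cons_of_mem _ hq)
    | some l =>
      simp only [insVScript, List.filterMap_cons, hl, Option.map_some]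
      refine .cons (hfresh v List.mem_cons_self) (ih hvs.of_cons fun q hq => ?_)
      have hqv : q ≠ v := fun h => (List.nodup_cons.mp hvs).1 (h ▸ hq)
      simpa [applyOp, hqv] using hfresh q (List.mem_cons_of_mem _ hq)

theorem validScript_insEScript (H : PreGraph ι L K D) (π : ι → ι) {es : List ι}
    (hes : es.Nodup)
    {G : PreGraph ι L K D} (hfresh : ∀ e ∈ es, e ∉ G.V ∪ G.E)
    (hends : ∀ e ∈ es, ∀ a, H.src e = some a ∨ H.tgt e = some a → π a ∈ G.V) :
    ValidScript G (insEScript H π es) := by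
  induction es generalizing G with
  | nil => exact .nil G
  | cons e es ih =>
    have htail : ∀ G' : PreGraph ι L K D, G'.V = G.V → G'.E ⊆ insert e G.E →
        ValidScript G' (insEScript H π es) := fun G' hV hE =>
      ih hes.of_cons (fun q hq hmem => by
        have hqe : q ≠ e := fun h => (List.nodup_cons.mp hes).1 (h ▸ hq)
        refine hfresh q (List.mem_cons_of_mem _ hq) ?_
        rcases Finset.mem_union.mp hmem with h | h
        · exact Finset.mem_union_left _ (hV ▸ h)
        · exact Finset.mem_union_right _ ((Finset.mem_insert.mp (hE h)).resolve_left hqe))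
        fun q hq a ha => hV ▸ hends q (List.mem_cons_of_mem _ hq) a ha
    rw [insEScript, List.filterMap_cons]
    split
    · exact htail G rfl (Finset.subset_insert _ _)
    · rename_i op hop
      split at hop
      · rename_i a b l ha hb _
        cases hop
        exact .cons ⟨hends e List.mem_cons_self a (.inl ha),
          hends e List.mem_cons_self b (.inr hb), hfresh e List.mem_cons_self⟩
          (htail _ rfl subset_rfl)
      · cases hop

end Scripts

section Isomorphisms

variable [DecidableEq ι]

theorem IsIso.exists_symm {G H : PreGraph ι L K D} {f : ι → ι} (hf : IsIso G H f) :
    ∃ g, IsIso H G g := by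
  obtain ⟨hf, g, hg, hgf, hfg⟩ := hf
  exact ⟨g, hg, f, hf, hfg, hgf⟩

theorem isIso_of_invOn {G H : PreGraph ι L K D} (hG : IsPGraph G) {f g : ι → ι}
    (hfV : ∀ v ∈ G.V, f v ∈ H.V) (hfE : ∀ e ∈ G.E, f e ∈ H.E)
    (hgV : ∀ v ∈ H.V, g v ∈ G.V) (hgE : ∀ e ∈ H.E, g e ∈ G.E)
    (hgf : ∀ x ∈ G.V ∪ G.E, g (f x) = x) (hfg : ∀ y ∈ H.V ∪ H.E, f (g y) = y)
    (hlab : ∀ x ∈ G.V ∪ G.E, H.lab (f x) = G.lab x)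
    (hsrc : ∀ e ∈ G.E, H.src (f e) = (G.src e).map f)
    (htgt : ∀ e ∈ G.E, H.tgt (f e) = (G.tgt e).map f)
    (hprop : ∀ x ∈ G.V ∪ G.E, ∀ k, H.prop (f x) k = G.prop x k) :
    IsIso G H f := by
  have hg_obj : ∀ y ∈ H.V ∪ H.E, g y ∈ G.V ∪ G.E := by
    simp only [Finset.mem_union]
    rintro y (hy | hy)
    exacts [.inl (hgV y hy), .inr (hgE y hy)]
  have hg_end : ∀ sG sH : ι → Option ι, (∀ e v, sG e = some v → v ∈ G.V) →
      (∀ e ∈ G.E, sH (f e) = (sG e).map f) →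
      ∀ e ∈ H.E, ∀ w, sH e = some w → sG (g e) = some (g w) := by
    intro sG sH hmem hsH e he w hw
    have := hsH (g e) (hgE e he)
    rw [hfg e (Finset.mem_union_right _ he), hw] at this
    obtain ⟨v, hv, rfl⟩ := Option.map_eq_some_iff.mp this.symm
    rw [hv, hgf v (Finset.mem_union_left _ (hmem _ v hv))]
  refine ⟨⟨hfV, hfE, hlab, ?_, ?_, ?_⟩, g, ⟨hgV, hgE, ?_, ?_, ?_, ?_⟩, hgf, hfg⟩
  · intro e he v hv
    rw [hsrc e he, hv, Option.map_some]
  · intro e he v hv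
    rw [htgt e he, hv, Option.map_some]
  · intro x hx k d hd
    rwa [hprop x hx]
  · intro y hy
    rw [← hlab (g y) (hg_obj y hy), hfg y hy]
  · exact hg_end G.src H.src hG.src_mem hsrc
  · exact hg_end G.tgt H.tgt hG.tgt_mem htgt
  · intro y hy k d hd
    rwa [← hprop (g y) (hg_obj y hy), hfg y hy]

end Isomorphisms

section PartialIso

def matchMap (h : ι → Option ι) (x : ι) : ι := (h x).getD x

open Classical in
noncomputable def matchInv (h : ι → Option ι) (y : ι) : ι :=
  if hy : ∃ x, h x = some y then hy.choose else y

variable {G1 G2 : PreGraph ι L K D} {h : ι → Option ι}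

theorem matchMap_of_eq_some {x y : ι} (hxy : h x = some y) : matchMap h x = y := by
  rw [matchMap, hxy, Option.getD_some]

theorem matchMap_of_eq_none {x : ι} (hx : h x = none) : matchMap h x = x := by
  rw [matchMap, hx, Option.getD_none]

theorem matchInv_of_forall_ne {y : ι} (hy : ∀ x, h x ≠ some y) : matchInv h y = y :=
  dif_neg fun ⟨x, hx⟩ => hy x hx

theorem IsPartialIso.matchInv_eq (hpi : IsPartialIso G1 G2 h) {x y : ι} (hxy : h x = some y) :
    matchInv h y = x := by
  have hy : ∃ x, h x = some y := ⟨x, hxy⟩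
  rw [matchInv, dif_pos hy]
  exact hpi.2.1 _ _ _ hy.choose_spec hxy

theorem IsPartialIso.map_matchInv_endpoint (hpi : IsPartialIso G1 G2 h)
    {s1 s2 : ι → Option ι} (hs : ∀ e e' v, h e = some e' → s1 e = some v → h v = s2 e')
    {x y : ι} (hxy : h x = some y) (hx : (s1 x).isSome) (hy : (s2 y).isSome) :
    (s2 y).map (matchInv h) = s1 x := by
  obtain ⟨v, hv⟩ := Option.isSome_iff_exists.mp hx
  obtain ⟨w, hw⟩ := Option.isSome_iff_exists.mp hy
  rw [hv, hw, Option.map_some, hpi.matchInv_eq ((hs x y v hxy hv).trans hw)]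

variable [DecidableEq ι]

theorem IsPartialIso.mem_of_eq_some (hpi : IsPartialIso G1 G2 h) {x y : ι} (hxy : h x = some y) :
    x ∈ G1.V ∪ G1.E ∧ y ∈ G2.V ∪ G2.E := by
  rcases hpi.1 x y hxy with ⟨hx, hy⟩ | ⟨hx, hy⟩
  · exact ⟨Finset.mem_union_left _ hx, Finset.mem_union_left _ hy⟩
  · exact ⟨Finset.mem_union_right _ hx, Finset.mem_union_right _ hy⟩

theorem IsPartialIso.eq_none_of_notMem (hpi : IsPartialIso G1 G2 h) {x : ι}
    (hx : x ∉ G1.V ∪ G1.E) : h x = none :=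
  Option.eq_none_iff_forall_ne_some.mpr fun _ hxy => hx (hpi.mem_of_eq_some hxy).1

theorem IsPartialIso.mem_V_iff (hpi : IsPartialIso G1 G2 h) (hG1 : IsPGraph G1)
    (hG2 : IsPGraph G2) {x y : ι} (hxy : h x = some y) : x ∈ G1.V ↔ y ∈ G2.V := by
  rcases hpi.1 x y hxy with ⟨hx, hy⟩ | ⟨hx, hy⟩
  · exact iff_of_true hx hy
  · exact iff_of_false (Finset.disjoint_right.mp hG1.disj hx)
      (Finset.disjoint_right.mp hG2.disj hy)

theorem IsPartialIso.mem_E_iff (hpi : IsPartialIso G1 G2 h) (hG1 : IsPGraph G1)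
    (hG2 : IsPGraph G2) {x y : ι} (hxy : h x = some y) : x ∈ G1.E ↔ y ∈ G2.E := by
  rcases hpi.1 x y hxy with ⟨hx, hy⟩ | ⟨hx, hy⟩
  · exact iff_of_false (Finset.disjoint_left.mp hG1.disj hx) (Finset.disjoint_left.mp hG2.disj hy)
  · exact iff_of_true hx hy

theorem notMem_of_mem_unmatchedR (hdisj : Disjoint (G1.V ∪ G1.E) (G2.V ∪ G2.E)) {y : ι}
    (hy : y ∈ unmatchedR G1 G2 h) : y ∉ G1.V ∪ G1.E :=
  Finset.disjoint_right.mp hdisj (Finset.mem_filter.mp hy).1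

theorem IsPartialIso.matchInv_of_mem_unmatchedR (hpi : IsPartialIso G1 G2 h) {y : ι}
    (hy : y ∈ unmatchedR G1 G2 h) : matchInv h y = y :=
  matchInv_of_forall_ne fun x hx => (Finset.mem_filter.mp hy).2 x (hpi.mem_of_eq_some hx).1 hx

theorem IsPartialIso.matchInv_cases (hpi : IsPartialIso G1 G2 h) {y : ι}
    (hy : y ∈ G2.V ∪ G2.E) :
    (∃ x, h x = some y ∧ matchInv h y = x) ∨
      (y ∈ unmatchedR G1 G2 h ∧ matchInv h y = y) := by
  by_cases hm : ∃ x, h x = some y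
  · obtain ⟨x, hx⟩ := hm
    exact .inl ⟨x, hx, hpi.matchInv_eq hx⟩
  · have hy' : y ∈ unmatchedR G1 G2 h :=
      Finset.mem_filter.mpr ⟨hy, fun x _ hx => hm ⟨x, hx⟩⟩
    exact .inr ⟨hy', hpi.matchInv_of_mem_unmatchedR hy'⟩

theorem matchMap_matchInv (hdisj : Disjoint (G1.V ∪ G1.E) (G2.V ∪ G2.E))
    (hpi : IsPartialIso G1 G2 h) {y : ι} (hy : y ∈ G2.V ∪ G2.E) :
    matchMap h (matchInv h y) = y := by
  rcases hpi.matchInv_cases hy with ⟨x, hxy, hx⟩ | ⟨hy', hy''⟩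
  · rw [hx, matchMap_of_eq_some hxy]
  · rw [hy'', matchMap_of_eq_none (hpi.eq_none_of_notMem (notMem_of_mem_unmatchedR hdisj hy'))]

theorem IsPartialIso.endpoint_ne_none (hpi : IsPartialIso G1 G2 h) (hG1 : IsPGraph G1)
    (hG2 : IsPGraph G2) {e v : ι} (he : h e ≠ none)
    (hv : G1.src e = some v ∨ G1.tgt e = some v) : h v ≠ none := by
  obtain ⟨e', he'⟩ := Option.ne_none_iff_exists'.mp he
  have heE : e ∈ G1.E := by
    rcases hv with hv | hv
    exacts [(hG1.src_dom e).mp (by simp [hv]), (hG1.tgt_dom e).mp (by simp [hv])]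
  have he'E := (hpi.mem_E_iff hG1 hG2 he').mp heE
  rcases hv with hv | hv
  · rw [hpi.2.2.2.1 e e' v he' hv]
    exact Option.isSome_iff_ne_none.mp ((hG2.src_dom e').mpr he'E)
  · rw [hpi.2.2.2.2 e e' v he' hv]
    exact Option.isSome_iff_ne_none.mp ((hG2.tgt_dom e').mpr he'E)

end PartialIso

theorem Finset.card_filter_product {α β : Type*} (s : Finset α) (t : Finset β)
    (p : α × β → Prop) [DecidablePred p] :
    ((s ×ˢ t).filter p).card = ∑ x ∈ s, (t.filter fun y => p (x, y)).card := by
  simp only [Finset.card_filter, Finset.sum_product]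

section Matching

variable [DecidableEq ι] (G1 G2 : PreGraph ι L K D) (h : ι → Option ι)

def unmatchedVL : Finset ι := G1.V.filter (h · = none)

def unmatchedEL : Finset ι := G1.E.filter (h · = none)

def unmatchedVR : Finset ι := G2.V.filter fun y => ∀ x ∈ G1.V ∪ G1.E, h x ≠ some y

def unmatchedER : Finset ι := G2.E.filter fun y => ∀ x ∈ G1.V ∪ G1.E, h x ≠ some y

-- An unmatched object is its own image, so by disjointness unmatched objects of `G1` get `none`.
def targetProp (x : ι) (k : K) : Option D := G2.prop (matchMap h x) k

variable {G1 G2 h}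

theorem card_unmatchedL (hG1 : IsPGraph G1) :
    (unmatchedL G1 h).card = (unmatchedVL G1 h).card + (unmatchedEL G1 h).card := by
  rw [unmatchedL, Finset.filter_union,
    Finset.card_union_of_disjoint (Finset.disjoint_filter_filter hG1.disj), unmatchedVL,
    unmatchedEL]

theorem card_unmatchedR (hG2 : IsPGraph G2) :
    (unmatchedR G1 G2 h).card = (unmatchedVR G1 G2 h).card + (unmatchedER G1 G2 h).card := by
  rw [unmatchedR, Finset.filter_union,
    Finset.card_union_of_disjoint (Finset.disjoint_filter_filter hG2.disj), unmatchedVR,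
    unmatchedER]

theorem isSome_lab_of_mem_unmatchedVR (hG2 : IsPGraph G2) {v : ι}
    (hv : v ∈ unmatchedVR G1 G2 h) : (G2.lab v).isSome :=
  (hG2.lab_dom v).mpr (Finset.mem_union_left _ (Finset.mem_filter.mp hv).1)

theorem isSome_src_tgt_lab_of_mem_unmatchedER (hG2 : IsPGraph G2) {e : ι}
    (he : e ∈ unmatchedER G1 G2 h) :
    (G2.src e).isSome ∧ (G2.tgt e).isSome ∧ (G2.lab e).isSome := by
  have he := (Finset.mem_filter.mp he).1
  exact ⟨(hG2.src_dom e).mpr he, (hG2.tgt_dom e).mpr he,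
    (hG2.lab_dom e).mpr (Finset.mem_union_right _ he)⟩

theorem unmatchedVR_subset : unmatchedVR G1 G2 h ⊆ unmatchedR G1 G2 h :=
  Finset.filter_subset_filter _ Finset.subset_union_left

theorem unmatchedER_subset : unmatchedER G1 G2 h ⊆ unmatchedR G1 G2 h :=
  Finset.filter_subset_filter _ Finset.subset_union_right

theorem targetProp_eq_none_of_eq_none (hG2 : IsPGraph G2)
    (hdisj : Disjoint (G1.V ∪ G1.E) (G2.V ∪ G2.E)) {x : ι} (hx : x ∈ G1.V ∪ G1.E)
    (hxh : h x = none) (k : K) : targetProp G2 h x k = none := by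
  rw [targetProp, matchMap, hxh, Option.getD_none]
  exact Option.eq_none_iff_forall_ne_some.mpr
    fun _ hd => Finset.disjoint_left.mp hdisj hx (hG2.prop_dom x k (by simp [hd]))

end Matching

section InducedScript

variable [DecidableEq ι] [DecidableEq D] [Fintype K]
variable (G1 G2 : PreGraph ι L K D) (h : ι → Option ι)

-- Unmatched objects of `G2` are inserted bare under their own identifiers, so each of their
-- properties is a difference as well.
def propDiff : Finset (ι × K) :=
  ((G1.V ∪ G1.E ∪ unmatchedR G1 G2 h) ×ˢ Finset.univ).filter fun p =>
    G1.prop p.1 p.2 ≠ targetProp G2 h p.1 p.2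

def delPKeys : Finset (ι × K) :=
  (propDiff G1 G2 h).filter fun p => G1.prop p.1 p.2 ≠ none ∧ targetProp G2 h p.1 p.2 = none

def updPKeys : Finset (ι × K) :=
  (propDiff G1 G2 h).filter fun p => G1.prop p.1 p.2 ≠ none ∧ targetProp G2 h p.1 p.2 ≠ none

def insPKeys : Finset (ι × K) := (propDiff G1 G2 h).filter fun p => G1.prop p.1 p.2 = none

noncomputable def deletionScript : List (EditOp ι L K D) :=
  delPScript (delPKeys G1 G2 h).toList ++ delEScript (unmatchedEL G1 h).toList ++
    delVScript (unmatchedVL G1 h).toList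

noncomputable def updateScript : List (EditOp ι L K D) :=
  setPScript .updP (targetProp G2 h) (updPKeys G1 G2 h).toList

noncomputable def insertionScript : List (EditOp ι L K D) :=
  insVScript G2 (unmatchedVR G1 G2 h).toList ++
    insEScript G2 (matchInv h) (unmatchedER G1 G2 h).toList ++
    setPScript .insP (targetProp G2 h) (insPKeys G1 G2 h).toList

noncomputable def inducedScript : List (EditOp ι L K D) :=
  deletionScript G1 G2 h ++ updateScript G1 G2 h ++ insertionScript G1 G2 h

theorem canonical_inducedScript : Canonical (inducedScript G1 G2 h) := by
  simp only [inducedScript, deletionScript, updateScript, insertionScript, ← List.append_assoc]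
  refine ⟨_, _, _, _, _, _, _, rfl, ?_, ?_, ?_, ?_, ?_, ?_, ?_⟩ <;>
    simp only [delPScript, delEScript, delVScript, setPScript, insVScript, insEScript,
      List.mem_map, List.mem_filterMap,
      Option.map_eq_some_iff] <;> rintro op ⟨_, -, hop⟩
  · exact ⟨_, _, hop.symm⟩
  · exact ⟨_, hop.symm⟩
  · exact ⟨_, hop.symm⟩
  · obtain ⟨d, -, rfl⟩ := hop; exact ⟨_, _, _, rfl⟩
  · obtain ⟨l, -, rfl⟩ := hop; exact ⟨_, _, rfl⟩
  · split at hop <;> cases hop; exact ⟨_, _, _, _, rfl⟩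
  · obtain ⟨d, -, rfl⟩ := hop; exact ⟨_, _, _, rfl⟩

variable {G1 G2 h}

theorem card_propDiff : (propDiff G1 G2 h).card =
    (delPKeys G1 G2 h).card + (updPKeys G1 G2 h).card + (insPKeys G1 G2 h).card := by
  rw [delPKeys, updPKeys, insPKeys, ← Finset.filter_filter, ← Finset.filter_filter,
    Finset.card_filter_add_card_filter_not, add_comm, Finset.card_filter_add_card_filter_not]

theorem card_propDiff_fiber_of_mem_left (hG2 : IsPGraph G2)
    (hdisj : Disjoint (G1.V ∪ G1.E) (G2.V ∪ G2.E)) {x : ι} (hx : x ∈ G1.V ∪ G1.E) :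
    (Finset.univ.filter fun k => G1.prop x k ≠ targetProp G2 h x k).card =
      (h x).elim 0 (mismatchCount G1 G2 x) + if h x = none then propsOn G1 x else 0 := by
  cases hxh : h x with
  | none =>
    have hx2 (k : K) : G2.prop x k = none := Option.eq_none_iff_forall_ne_some.mpr
      fun _ hd => Finset.disjoint_left.mp hdisj hx (hG2.prop_dom x k (by simp [hd]))
    simp [targetProp, matchMap, hxh, hx2, propsOn, Option.isSome_iff_ne_none]
  | some y => simp [targetProp, matchMap, hxh, mismatchCount]

theorem card_propDiff_fiber_of_mem_right (hG1 : IsPGraph G1)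
    (hdisj : Disjoint (G1.V ∪ G1.E) (G2.V ∪ G2.E)) (hpi : IsPartialIso G1 G2 h) {y : ι}
    (hy : y ∈ unmatchedR G1 G2 h) :
    (Finset.univ.filter fun k => G1.prop y k ≠ targetProp G2 h y k).card = propsOn G2 y := by
  have hy1 := notMem_of_mem_unmatchedR hdisj hy
  have hy1' (k : K) : G1.prop y k = none :=
    Option.eq_none_iff_forall_ne_some.mpr fun _ hd => hy1 (hG1.prop_dom y k (by simp [hd]))
  simp [targetProp, matchMap, hpi.eq_none_of_notMem hy1, hy1', propsOn, Option.isSome_iff_ne_none,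
    ne_comm]

theorem pisoCost_eq_card (hG1 : IsPGraph G1) (hG2 : IsPGraph G2)
    (hdisj : Disjoint (G1.V ∪ G1.E) (G2.V ∪ G2.E)) (hpi : IsPartialIso G1 G2 h) :
    pisoCost G1 G2 h =
      (unmatchedL G1 h).card + (unmatchedR G1 G2 h).card + (propDiff G1 G2 h).card := by
  have hdisjR : Disjoint (G1.V ∪ G1.E) (unmatchedR G1 G2 h) :=
    hdisj.mono_right (Finset.filter_subset _ _)
  rw [pisoCost, propDiff, Finset.card_filter_product, Finset.sum_union hdisjR,
    Finset.sum_congr rfl fun x hx => card_propDiff_fiber_of_mem_left hG2 hdisj hx,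
    Finset.sum_congr rfl fun y hy => card_propDiff_fiber_of_mem_right hG1 hdisj hpi hy,
    Finset.sum_add_distrib, unmatchedL, Finset.sum_filter]
  ring

theorem isSome_targetProp_of_mem_updPKeys {p : ι × K} (hp : p ∈ updPKeys G1 G2 h) :
    (targetProp G2 h p.1 p.2).isSome :=
  Option.isSome_iff_ne_none.mpr (Finset.mem_filter.mp hp).2.2

theorem isSome_targetProp_of_mem_insPKeys {p : ι × K} (hp : p ∈ insPKeys G1 G2 h) :
    (targetProp G2 h p.1 p.2).isSome := by
  obtain ⟨hp, hnone⟩ := Finset.mem_filter.mp hp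
  have hne := (Finset.mem_filter.mp hp).2
  rw [hnone] at hne
  exact Option.isSome_iff_ne_none.mpr hne.symm

theorem length_inducedScript (hG1 : IsPGraph G1) (hG2 : IsPGraph G2)
    (hdisj : Disjoint (G1.V ∪ G1.E) (G2.V ∪ G2.E)) (hpi : IsPartialIso G1 G2 h) :
    (inducedScript G1 G2 h).length = pisoCost G1 G2 h := by
  rw [pisoCost_eq_card hG1 hG2 hdisj hpi, card_unmatchedL hG1, card_unmatchedR hG2, card_propDiff]
  simp only [inducedScript, deletionScript, updateScript, insertionScript, List.length_append,
    delPScript, delEScript, delVScript, List.length_map,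
    Finset.length_toList,
    length_setPScript _ fun p hp => isSome_targetProp_of_mem_updPKeys (Finset.mem_toList.mp hp),
    length_setPScript _ fun p hp => isSome_targetProp_of_mem_insPKeys (Finset.mem_toList.mp hp),
    length_insVScript fun v hv => isSome_lab_of_mem_unmatchedVR hG2 (Finset.mem_toList.mp hv),
    length_insEScript fun e he =>
      isSome_src_tgt_lab_of_mem_unmatchedER hG2 (Finset.mem_toList.mp he)]
  ring

theorem prop_eq_none_of_notMem_delPKeys (hG2 : IsPGraph G2)
    (hdisj : Disjoint (G1.V ∪ G1.E) (G2.V ∪ G2.E)) {x : ι} {k : K} (hx : x ∈ G1.V ∪ G1.E)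
    (hxh : h x = none) (hk : (x, k) ∉ delPKeys G1 G2 h) : G1.prop x k = none := by
  by_contra hne
  have ht := targetProp_eq_none_of_eq_none hG2 hdisj hx hxh k
  refine hk (Finset.mem_filter.mpr ⟨Finset.mem_filter.mpr ⟨?_, by rwa [ht]⟩, hne, ht⟩)
  exact Finset.mem_product.mpr ⟨Finset.mem_union_left _ hx, Finset.mem_univ _⟩

variable (G1 G2 h) [DecidableEq K]

-- The branches, read from the inside out, are the successive phases of `inducedScript`.
noncomputable def inducedGraph : PreGraph ι L K D where
  V := G1.V.filter (· ∉ unmatchedVL G1 h) ∪ unmatchedVR G1 G2 h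
  E := G1.E.filter (· ∉ unmatchedEL G1 h) ∪ unmatchedER G1 G2 h
  src x := if x ∈ unmatchedER G1 G2 h then (G2.src x).map (matchInv h)
    else if x ∈ unmatchedEL G1 h then none else G1.src x
  tgt x := if x ∈ unmatchedER G1 G2 h then (G2.tgt x).map (matchInv h)
    else if x ∈ unmatchedEL G1 h then none else G1.tgt x
  lab x := if x ∈ unmatchedER G1 G2 h then G2.lab x
    else if x ∈ unmatchedVR G1 G2 h then G2.lab x
    else if x ∈ unmatchedVL G1 h then none
    else if x ∈ unmatchedEL G1 h then none else G1.lab x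
  prop x k := if (x, k) ∈ insPKeys G1 G2 h then targetProp G2 h x k
    else if (x, k) ∈ updPKeys G1 G2 h then targetProp G2 h x k
    else if (x, k) ∈ delPKeys G1 G2 h then none else G1.prop x k

variable {G1 G2 h}

theorem applyScript_inducedScript (hG2 : IsPGraph G2) :
    applyScript (inducedScript G1 G2 h) G1 = inducedGraph G1 G2 h := by
  simp only [inducedScript, deletionScript, updateScript, insertionScript, applyScript_append,
    applyScript_delPScript, applyScript_delEScript,
    applyScript_delVScript, Finset.mem_toList, Finset.toList_toFinset,
    applyScript_setPScript (mk := .updP) (fun _ _ _ _ => rfl)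
      fun p hp => isSome_targetProp_of_mem_updPKeys (Finset.mem_toList.mp hp),
    applyScript_setPScript (mk := .insP) (fun _ _ _ _ => rfl)
      fun p hp => isSome_targetProp_of_mem_insPKeys (Finset.mem_toList.mp hp),
    applyScript_insVScript fun v hv => isSome_lab_of_mem_unmatchedVR hG2 (Finset.mem_toList.mp hv),
    applyScript_insEScript fun e he =>
      isSome_src_tgt_lab_of_mem_unmatchedER hG2 (Finset.mem_toList.mp he)]
  rfl

theorem mem_inducedGraph_V {x : ι} :
    x ∈ (inducedGraph G1 G2 h).V ↔
      x ∈ G1.V ∧ h x ≠ none ∨ x ∈ unmatchedVR G1 G2 h := by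
  simp only [inducedGraph, unmatchedVL, Finset.mem_union, Finset.mem_filter]
  tauto

theorem mem_inducedGraph_E {x : ι} :
    x ∈ (inducedGraph G1 G2 h).E ↔
      x ∈ G1.E ∧ h x ≠ none ∨ x ∈ unmatchedER G1 G2 h := by
  simp only [inducedGraph, unmatchedEL, Finset.mem_union, Finset.mem_filter]
  tauto

theorem mem_inducedGraph_objects {x : ι} :
    x ∈ (inducedGraph G1 G2 h).V ∪ (inducedGraph G1 G2 h).E ↔
      x ∈ G1.V ∪ G1.E ∧ h x ≠ none ∨ x ∈ unmatchedR G1 G2 h := by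
  simp only [Finset.mem_union, mem_inducedGraph_V, mem_inducedGraph_E, unmatchedR, unmatchedVR,
    unmatchedER, Finset.mem_filter]
  tauto

theorem fst_mem_inducedGraph_of_mem_insPKeys (hG2 : IsPGraph G2)
    (hdisj : Disjoint (G1.V ∪ G1.E) (G2.V ∪ G2.E)) {p : ι × K} (hp : p ∈ insPKeys G1 G2 h) :
    p.1 ∈ (inducedGraph G1 G2 h).V ∪ (inducedGraph G1 G2 h).E := by
  obtain ⟨hdiff, hnone⟩ := Finset.mem_filter.mp hp
  obtain ⟨hobj, hne⟩ := Finset.mem_filter.mp hdiff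
  rw [mem_inducedGraph_objects]
  refine (Finset.mem_union.mp (Finset.mem_product.mp hobj).1).imp
    (fun hp1 => ⟨hp1, fun hc => ?_⟩) id
  rw [hnone, targetProp_eq_none_of_eq_none hG2 hdisj hp1 hc] at hne
  exact hne rfl

theorem matchInv_mem_inducedGraph_V (hG1 : IsPGraph G1) (hG2 : IsPGraph G2)
    (hpi : IsPartialIso G1 G2 h) {y : ι} (hy : y ∈ G2.V) :
    matchInv h y ∈ (inducedGraph G1 G2 h).V := by
  rcases hpi.matchInv_cases (Finset.mem_union_left _ hy) with ⟨x, hxy, hx⟩ | ⟨hy', hx⟩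
  · rw [hx, mem_inducedGraph_V]
    exact .inl ⟨(hpi.mem_V_iff hG1 hG2 hxy).mpr hy, by simp [hxy]⟩
  · rw [hx, mem_inducedGraph_V]
    exact .inr (Finset.mem_filter.mpr ⟨hy, (Finset.mem_filter.mp hy').2⟩)

theorem matchInv_mem_inducedGraph_E (hG1 : IsPGraph G1) (hG2 : IsPGraph G2)
    (hpi : IsPartialIso G1 G2 h) {y : ι} (hy : y ∈ G2.E) :
    matchInv h y ∈ (inducedGraph G1 G2 h).E := by
  rcases hpi.matchInv_cases (Finset.mem_union_right _ hy) with ⟨x, hxy, hx⟩ | ⟨hy', hx⟩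
  · rw [hx, mem_inducedGraph_E]
    exact .inl ⟨(hpi.mem_E_iff hG1 hG2 hxy).mpr hy, by simp [hxy]⟩
  · rw [hx, mem_inducedGraph_E]
    exact .inr (Finset.mem_filter.mpr ⟨hy, (Finset.mem_filter.mp hy').2⟩)

theorem validScript_deletionScript (hG1 : IsPGraph G1) (hG2 : IsPGraph G2)
    (hdisj : Disjoint (G1.V ∪ G1.E) (G2.V ∪ G2.E)) (hpi : IsPartialIso G1 G2 h) :
    ValidScript G1 (deletionScript G1 G2 h) := by
  refine .append (.append ?dp ?de) ?dv <;>
    try simp only [applyScript_append, applyScript_delPScript, applyScript_delEScript,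
      Finset.mem_toList]
  case dp =>
    refine validScript_delPScript (Finset.nodup_toList _) fun p hp => ?_
    exact Option.isSome_iff_ne_none.mpr (Finset.mem_filter.mp (Finset.mem_toList.mp hp)).2.1
  case de =>
    refine validScript_delEScript (Finset.nodup_toList _) fun e he => ?_
    obtain ⟨heE, hnone⟩ := Finset.mem_filter.mp (Finset.mem_toList.mp he)
    exact ⟨heE, fun k => ite_eq_left_iff.mpr fun hk =>
      prop_eq_none_of_notMem_delPKeys hG2 hdisj (Finset.mem_union_right _ heE) hnone hk⟩
  case dv =>
    refine validScript_delVScript (Finset.nodup_toList _) fun v hv => ?_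
    obtain ⟨hvV, hnone⟩ := Finset.mem_filter.mp (Finset.mem_toList.mp hv)
    refine ⟨hvV, fun e he => ?_, fun k => ite_eq_left_iff.mpr fun hk =>
      prop_eq_none_of_notMem_delPKeys hG2 hdisj (Finset.mem_union_left _ hvV) hnone hk⟩
    obtain ⟨heE, hkept⟩ := Finset.mem_filter.mp he
    have hmatched : h e ≠ none := fun hc => hkept (Finset.mem_filter.mpr ⟨heE, hc⟩)
    simp only [hkept, if_false]
    exact ⟨fun hs => hpi.endpoint_ne_none hG1 hG2 hmatched (.inl hs) hnone,
      fun ht => hpi.endpoint_ne_none hG1 hG2 hmatched (.inr ht) hnone⟩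

theorem validScript_updateScript :
    ValidScript (applyScript (deletionScript G1 G2 h) G1) (updateScript G1 G2 h) := by
  simp only [deletionScript, applyScript_append, applyScript_delPScript, applyScript_delEScript,
    applyScript_delVScript]
  refine validScript_setPScript_updP fun p hp => ?_
  obtain ⟨-, hdef, hchg⟩ := Finset.mem_filter.mp (Finset.mem_toList.mp hp)
  have hdel : p ∉ delPKeys G1 G2 h := fun hc => hchg (Finset.mem_filter.mp hc).2.2
  simpa [hdel, Option.isSome_iff_ne_none] using hdef

theorem validScript_insertionScript (hG1 : IsPGraph G1) (hG2 : IsPGraph G2)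
    (hdisj : Disjoint (G1.V ∪ G1.E) (G2.V ∪ G2.E)) (hpi : IsPartialIso G1 G2 h) :
    ValidScript (applyScript (deletionScript G1 G2 h ++ updateScript G1 G2 h) G1)
      (insertionScript G1 G2 h) := by
  refine .append (.append ?iv ?ie) ?ip <;>
  simp only [deletionScript, updateScript, applyScript_append, applyScript_delPScript,
    applyScript_delEScript, applyScript_delVScript, Finset.mem_toList, Finset.toList_toFinset,
    applyScript_setPScript (mk := .updP) (fun _ _ _ _ => rfl)
      fun p hp => isSome_targetProp_of_mem_updPKeys (Finset.mem_toList.mp hp),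
    applyScript_insVScript fun v hv => isSome_lab_of_mem_unmatchedVR hG2 (Finset.mem_toList.mp hv),
    applyScript_insEScript fun e he =>
      isSome_src_tgt_lab_of_mem_unmatchedER hG2 (Finset.mem_toList.mp he)]
  case iv =>
    refine validScript_insVScript _ (Finset.nodup_toList _) fun v hv hmem => ?_
    refine notMem_of_mem_unmatchedR hdisj (unmatchedVR_subset (Finset.mem_toList.mp hv)) ?_
    exact Finset.union_subset_union (Finset.filter_subset _ _) (Finset.filter_subset _ _) hmem
  case ie =>
    refine validScript_insEScript _ _ (Finset.nodup_toList _) (fun e he hmem => ?_)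
      fun e he a ha => ?_
    · have he' := Finset.mem_toList.mp he
      simp only [Finset.mem_union, Finset.mem_filter] at hmem
      rcases hmem with (⟨he1, -⟩ | he1) | ⟨he1, -⟩
      · exact notMem_of_mem_unmatchedR hdisj (unmatchedER_subset he')
          (Finset.mem_union_left _ he1)
      · exact Finset.disjoint_left.mp hG2.disj (Finset.mem_filter.mp he1).1
          (Finset.mem_filter.mp he').1
      · exact notMem_of_mem_unmatchedR hdisj (unmatchedER_subset he')
          (Finset.mem_union_right _ he1)
    · refine matchInv_mem_inducedGraph_V hG1 hG2 hpi ?_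
      rcases ha with ha | ha
      exacts [hG2.src_mem e a ha, hG2.tgt_mem e a ha]
  case ip =>
    refine validScript_setPScript_insP (Finset.nodup_toList _) fun p hp => ?_
    have hp := Finset.mem_toList.mp hp
    have hup : p ∉ updPKeys G1 G2 h := fun hc =>
      (Finset.mem_filter.mp hc).2.1 (Finset.mem_filter.mp hp).2
    exact ⟨fst_mem_inducedGraph_of_mem_insPKeys hG2 hdisj hp, by
      simp only [if_neg hup, ite_eq_left_iff]
      exact fun _ => (Finset.mem_filter.mp hp).2⟩

theorem validScript_inducedScript (hG1 : IsPGraph G1) (hG2 : IsPGraph G2)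
    (hdisj : Disjoint (G1.V ∪ G1.E) (G2.V ∪ G2.E)) (hpi : IsPartialIso G1 G2 h) :
    ValidScript G1 (inducedScript G1 G2 h) :=
  ((validScript_deletionScript hG1 hG2 hdisj hpi).append validScript_updateScript).append
    (validScript_insertionScript hG1 hG2 hdisj hpi)

theorem inducedGraph_prop {x : ι} (hx : x ∈ G1.V ∪ G1.E ∪ unmatchedR G1 G2 h) (k : K) :
    (inducedGraph G1 G2 h).prop x k = targetProp G2 h x k := by
  by_cases hd : (x, k) ∈ propDiff G1 G2 h
  · have hne := (Finset.mem_filter.mp hd).2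
    simp only [inducedGraph, insPKeys, updPKeys, delPKeys, Finset.mem_filter, hd, true_and]
    split_ifs with hins hupd hdel
    · rfl
    · rfl
    · exact hdel.2.symm
    · by_cases hT : targetProp G2 h x k = none <;> tauto
  · have heq : G1.prop x k = targetProp G2 h x k := by
      by_contra hne
      exact hd (Finset.mem_filter.mpr ⟨Finset.mem_product.mpr ⟨hx, Finset.mem_univ _⟩, hne⟩)
    have hkeys : ∀ s ⊆ propDiff G1 G2 h, (x, k) ∉ s := fun _ hs hmem => hd (hs hmem)
    simp only [inducedGraph, hkeys _ (Finset.filter_subset _ _), if_false, heq, insPKeys, updPKeys,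
      delPKeys]

theorem inducedGraph_of_eq_some (hdisj : Disjoint (G1.V ∪ G1.E) (G2.V ∪ G2.E))
    (hpi : IsPartialIso G1 G2 h) {x y : ι} (hxy : h x = some y) :
    (inducedGraph G1 G2 h).lab x = G1.lab x ∧ (inducedGraph G1 G2 h).src x = G1.src x ∧
      (inducedGraph G1 G2 h).tgt x = G1.tgt x := by
  have hx := (hpi.mem_of_eq_some hxy).1
  have hVR : x ∉ unmatchedVR G1 G2 h := fun hc =>
    notMem_of_mem_unmatchedR hdisj (unmatchedVR_subset hc) hx
  have hER : x ∉ unmatchedER G1 G2 h := fun hc =>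
    notMem_of_mem_unmatchedR hdisj (unmatchedER_subset hc) hx
  simp [inducedGraph, unmatchedVL, unmatchedEL, hVR, hER, hxy]

theorem inducedGraph_lab_of_mem_unmatchedR {y : ι} (hy : y ∈ unmatchedR G1 G2 h) :
    (inducedGraph G1 G2 h).lab y = G2.lab y := by
  have : y ∈ unmatchedER G1 G2 h ∨ y ∈ unmatchedVR G1 G2 h := by
    simp only [unmatchedR, unmatchedER, unmatchedVR, Finset.mem_filter, Finset.mem_union] at hy ⊢
    tauto
  simp only [inducedGraph]
  split_ifs <;> tauto

theorem matchInv_matchMap (hdisj : Disjoint (G1.V ∪ G1.E) (G2.V ∪ G2.E))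
    (hpi : IsPartialIso G1 G2 h) {x : ι}
    (hx : x ∈ (inducedGraph G1 G2 h).V ∪ (inducedGraph G1 G2 h).E) :
    matchInv h (matchMap h x) = x := by
  rcases mem_inducedGraph_objects.mp hx with ⟨-, hxh⟩ | hx'
  · obtain ⟨y, hxy⟩ := Option.ne_none_iff_exists'.mp hxh
    rw [matchMap_of_eq_some hxy, hpi.matchInv_eq hxy]
  · rw [matchMap_of_eq_none (hpi.eq_none_of_notMem (notMem_of_mem_unmatchedR hdisj hx')),
      hpi.matchInv_of_mem_unmatchedR hx']

theorem matchMap_mem_V (hG1 : IsPGraph G1) (hG2 : IsPGraph G2)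
    (hdisj : Disjoint (G1.V ∪ G1.E) (G2.V ∪ G2.E)) (hpi : IsPartialIso G1 G2 h) {x : ι}
    (hx : x ∈ (inducedGraph G1 G2 h).V) : matchMap h x ∈ G2.V := by
  rcases mem_inducedGraph_V.mp hx with ⟨hx1, hxh⟩ | hx'
  · obtain ⟨y, hxy⟩ := Option.ne_none_iff_exists'.mp hxh
    rw [matchMap_of_eq_some hxy]
    exact (hpi.mem_V_iff hG1 hG2 hxy).mp hx1
  · rw [matchMap_of_eq_none (hpi.eq_none_of_notMem
      (notMem_of_mem_unmatchedR hdisj (unmatchedVR_subset hx')))]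
    exact (Finset.mem_filter.mp hx').1

theorem matchMap_mem_E (hG1 : IsPGraph G1) (hG2 : IsPGraph G2)
    (hdisj : Disjoint (G1.V ∪ G1.E) (G2.V ∪ G2.E)) (hpi : IsPartialIso G1 G2 h) {x : ι}
    (hx : x ∈ (inducedGraph G1 G2 h).E) : matchMap h x ∈ G2.E := by
  rcases mem_inducedGraph_E.mp hx with ⟨hx1, hxh⟩ | hx'
  · obtain ⟨y, hxy⟩ := Option.ne_none_iff_exists'.mp hxh
    rw [matchMap_of_eq_some hxy]
    exact (hpi.mem_E_iff hG1 hG2 hxy).mp hx1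
  · rw [matchMap_of_eq_none (hpi.eq_none_of_notMem
      (notMem_of_mem_unmatchedR hdisj (unmatchedER_subset hx')))]
    exact (Finset.mem_filter.mp hx').1


theorem isIso_inducedGraph (hG1 : IsPGraph G1) (hG2 : IsPGraph G2)
    (hdisj : Disjoint (G1.V ∪ G1.E) (G2.V ∪ G2.E)) (hpi : IsPartialIso G1 G2 h) :
    IsIso G2 (inducedGraph G1 G2 h) (matchInv h) := by
  have hmatched_E : ∀ {x e}, h x = some e → e ∈ G2.E → x ∈ G1.E := fun hxe he =>
    (hpi.mem_E_iff hG1 hG2 hxe).mpr he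
  refine isIso_of_invOn hG2 (g := matchMap h)
    (fun v hv => matchInv_mem_inducedGraph_V hG1 hG2 hpi hv)
    (fun e he => matchInv_mem_inducedGraph_E hG1 hG2 hpi he)
    (fun x hx => matchMap_mem_V hG1 hG2 hdisj hpi hx)
    (fun x hx => matchMap_mem_E hG1 hG2 hdisj hpi hx)
    (fun y hy => matchMap_matchInv hdisj hpi hy) (fun x hx => matchInv_matchMap hdisj hpi hx)
    (fun y hy => ?lab) (fun e he => ?src) (fun e he => ?tgt) (fun y hy k => ?prop)
  case lab =>
    rcases hpi.matchInv_cases hy with ⟨x, hxy, hx⟩ | ⟨hy', hx⟩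
    · rw [hx, (inducedGraph_of_eq_some hdisj hpi hxy).1, hpi.2.2.1 x y hxy]
    · rw [hx, inducedGraph_lab_of_mem_unmatchedR hy']
  case src =>
    rcases hpi.matchInv_cases (Finset.mem_union_right _ he) with ⟨x, hxe, hx⟩ | ⟨he', hx⟩
    · rw [hx, (inducedGraph_of_eq_some hdisj hpi hxe).2.1]
      exact (hpi.map_matchInv_endpoint hpi.2.2.2.1 hxe ((hG1.src_dom x).mpr (hmatched_E hxe he))
        ((hG2.src_dom e).mpr he)).symm
    · rw [hx]
      exact if_pos (Finset.mem_filter.mpr ⟨he, (Finset.mem_filter.mp he').2⟩)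
  case tgt =>
    rcases hpi.matchInv_cases (Finset.mem_union_right _ he) with ⟨x, hxe, hx⟩ | ⟨he', hx⟩
    · rw [hx, (inducedGraph_of_eq_some hdisj hpi hxe).2.2]
      exact (hpi.map_matchInv_endpoint hpi.2.2.2.2 hxe ((hG1.tgt_dom x).mpr (hmatched_E hxe he))
        ((hG2.tgt_dom e).mpr he)).symm
    · rw [hx]
      exact if_pos (Finset.mem_filter.mpr ⟨he, (Finset.mem_filter.mp he').2⟩)
  case prop =>
    have hmem : matchInv h y ∈ G1.V ∪ G1.E ∪ unmatchedR G1 G2 h := by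
      rcases hpi.matchInv_cases hy with ⟨x, hxy, hx⟩ | ⟨hy', hx⟩
      · rw [hx]
        exact Finset.mem_union_left _ (hpi.mem_of_eq_some hxy).1
      · rw [hx]
        exact Finset.mem_union_right _ hy'
    rw [inducedGraph_prop hmem, targetProp, matchMap_matchInv hdisj hpi hy]

end InducedScript

/-- every partial isomorphism `h` induces a valid canonical edit
script of length exactly `cost h` mapping `G1` to a graph isomorphic to `G2`;
consequently `GED(G1,G2) ≤ cost h`.  (As in the paper, the identifier sets of
the two graphs are assumed disjoint.) -/
theorem piso_induces_canonical_script
    [DecidableEq ι] [DecidableEq K] [DecidableEq D] [Fintype K]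
    (G1 G2 : PreGraph ι L K D) (hG1 : IsPGraph G1) (hG2 : IsPGraph G2)
    (hdisj : Disjoint (G1.V ∪ G1.E) (G2.V ∪ G2.E))
    (h : ι → Option ι) (hpi : IsPartialIso G1 G2 h) :
    (∃ ops : List (EditOp ι L K D), Canonical ops ∧ ValidScript G1 ops ∧
      (∃ f : ι → ι, IsIso (applyScript ops G1) G2 f) ∧
      ops.length = pisoCost G1 G2 h) ∧
    GED G1 G2 ≤ pisoCost G1 G2 h := by
  have hvalid := validScript_inducedScript hG1 hG2 hdisj hpi
  have hiso : ∃ f, IsIso (applyScript (inducedScript G1 G2 h) G1) G2 f := by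
    rw [applyScript_inducedScript hG2]
    -- built from the side of `G2`, whose endpoints are known to be nodes
    exact (isIso_inducedGraph hG1 hG2 hdisj hpi).exists_symm
  have hlen := length_inducedScript hG1 hG2 hdisj hpi
  exact ⟨⟨_, canonical_inducedScript G1 G2 h, hvalid, hiso, hlen⟩,
    Nat.sInf_le ⟨_, hvalid, hiso, hlen⟩⟩
end

section
/- If ops is a canonical edit script such that ops(G1) is isomorphic to G2, then there exists a partial isomorphism h between G1 and G2 with cost(h) ≤ |ops|. -/
/-!
Property graphs, homomorphisms/isomorphisms/subgraphs, edit operations,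
edit scripts, canonical scripts, graph edit distance, partial isomorphisms
and their cost, and the edit-script rewriting system of the paper
"Flexible graph matching and graph edit distance using answer set programming".
-/

universe u v w z

variable {ι : Type u} {L : Type v} {K : Type w} {D : Type z}

/-!
Pull a matching back along the script, one operation at a time. At the end of the script the
isomorphism `ops(G1) ≅ G2` is a partial isomorphism of cost 0. Undoing one operation raises the
cost by at most one: a property operation alters a single key of a single object; a deleted node
or edge carries no properties, so reinstating it unmatched costs exactly one; an inserted node or
edge is dropped from the matching, which leaves its partner in `G2` unmatched, and the properties
of that partner were already counted as mismatches against the property-less new object.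
-/

theorem Finset.card_filter_le_card_filter_add_one {α : Type*} {s : Finset α} {p q : α → Prop}
    [DecidablePred p] [DecidablePred q] (a : α) (h : ∀ x ∈ s, x ≠ a → p x → q x) :
    (s.filter p).card ≤ (s.filter q).card + 1 := by
  classical
  refine (Finset.card_le_card fun x hx => ?_).trans (Finset.card_insert_le a _)
  grind

theorem Finset.sum_le_sum_add_one {α : Type*} {s : Finset α} {f g : α → ℕ} (a : α)
    (h : ∀ x ∈ s, x ≠ a → f x ≤ g x) (ha : f a ≤ g a + 1) :
    ∑ x ∈ s, f x ≤ ∑ x ∈ s, g x + 1 := by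
  classical
  calc ∑ x ∈ s, f x ≤ ∑ x ∈ s, (g x + if x = a then 1 else 0) :=
        Finset.sum_le_sum fun x hx => by split_ifs <;> grind
    _ ≤ ∑ x ∈ s, g x + 1 := by
        rw [Finset.sum_add_distrib, Finset.sum_ite_eq']
        split_ifs <;> simp

section Matchings

variable [DecidableEq ι]

def restrictDom (G : PreGraph ι L K D) (h : ι → Option ι) : ι → Option ι :=
  fun x => if x ∈ G.V ∪ G.E then h x else none

structure IsExtensionBy (Gs Gb : PreGraph ι L K D) (z : ι) : Prop where
  isSubgraph : IsSubgraph Gs Gb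
  prop_eq : Gb.prop = Gs.prop
  not_mem : z ∉ Gs.V ∪ Gs.E
  dom_eq : Gb.V ∪ Gb.E = insert z (Gs.V ∪ Gs.E)

namespace IsExtensionBy

variable {Gs Gb G2 : PreGraph ι L K D} {z : ι}

theorem prop_eq_none (hA : IsExtensionBy Gs Gb z) (k : K) : Gb.prop z k = none := by
  rw [hA.prop_eq]
  exact Option.not_isSome_iff_eq_none.1 fun hk => hA.not_mem (hA.isSubgraph.1.prop_dom z k hk)

theorem mem_unmatchedR_iff (hA : IsExtensionBy Gs Gb z) (h : ι → Option ι) (y : ι) :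
    y ∈ unmatchedR Gb G2 h ↔ y ∈ unmatchedR Gs G2 h ∧ h z ≠ some y := by
  simp only [unmatchedR, Finset.mem_filter, hA.dom_eq, Finset.forall_mem_insert]
  tauto

end IsExtensionBy

namespace IsPartialIso

variable {G1 G2 Gs Gb : PreGraph ι L K D} {h : ι → Option ι}

theorem eq_none_of_notMem_s18 (hp : IsPartialIso G1 G2 h) {x : ι} (hx : x ∉ G1.V ∪ G1.E) :
    h x = none :=
  Option.eq_none_iff_forall_ne_some.2 fun y hxy => hx <| by
    rcases hp.1 x y hxy with ⟨hx, -⟩ | ⟨hx, -⟩ <;> simp [hx]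

theorem mono (hp : IsPartialIso Gs G2 h) (hsub : IsSubgraph Gs Gb) (hGb : IsPGraph Gb) :
    IsPartialIso Gb G2 h := by
  obtain ⟨-, hV, hE, hst, hlab, -⟩ := hsub
  obtain ⟨pdom, pinj, plab, psrc, ptgt⟩ := hp
  refine ⟨fun x y hxy => ?_, pinj, fun x y hxy => ?_, fun e e' v he hsrc => ?_,
    fun e e' v he htgt => ?_⟩
  · grind
  · rw [plab x y hxy, hlab x ((pdom x y hxy).elim (by grind) (by grind))]
  · have heE : e ∈ Gs.E := by
      have := (hGb.src_dom e).1 (by simp [hsrc])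
      grind [Finset.disjoint_left, hGb.disj]
    exact psrc e e' v he ((hst e heE).1.trans hsrc)
  · have heE : e ∈ Gs.E := by
      have := (hGb.tgt_dom e).1 (by simp [htgt])
      grind [Finset.disjoint_left, hGb.disj]
    exact ptgt e e' v he ((hst e heE).2.trans htgt)

theorem restrict (hp : IsPartialIso Gb G2 h) (hsub : IsSubgraph Gs Gb) (hGb : IsPGraph Gb) :
    IsPartialIso Gs G2 (restrictDom Gs h) := by
  obtain ⟨hGs, hV, hE, hst, hlab, -⟩ := hsub
  obtain ⟨pdom, pinj, plab, psrc, ptgt⟩ := hp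
  unfold restrictDom
  refine ⟨fun x y hxy => ?_, fun x x' y hx hx' => ?_, fun x y hxy => ?_,
    fun e e' v he hsrc => ?_, fun e e' v he htgt => ?_⟩
  · grind [Finset.disjoint_left, hGb.disj]
  · grind
  · grind
  · have heE : e ∈ Gs.E := (hGs.src_dom e).1 (by simp [hsrc])
    have hv : v ∈ Gs.V ∪ Gs.E := Finset.mem_union_left _ (hGs.src_mem e v hsrc)
    grind
  · have heE : e ∈ Gs.E := (hGs.tgt_dom e).1 (by simp [htgt])
    have hv : v ∈ Gs.V ∪ Gs.E := Finset.mem_union_left _ (hGs.tgt_mem e v htgt)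
    grind

end IsPartialIso

theorem IsIso.isPartialIso_restrictDom {G G2 : PreGraph ι L K D} {f : ι → ι}
    (hG : IsPGraph G) (hf : IsIso G G2 f) : IsPartialIso G G2 (restrictDom G (some ∘ f)) := by
  obtain ⟨hfh, g, -, hgf, -⟩ := hf
  unfold restrictDom
  refine ⟨fun x y hxy => ?_, fun x x' y hx hx' => ?_, fun x y hxy => ?_,
    fun e e' v he hsrc => ?_, fun e e' v he htgt => ?_⟩
  · grind [hfh.map_V, hfh.map_E]
  · grind
  · grind [hfh.lab_eq]
  · have heE : e ∈ G.E := (hG.src_dom e).1 (by simp [hsrc])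
    have hv : v ∈ G.V ∪ G.E := Finset.mem_union_left _ (hG.src_mem e v hsrc)
    grind [hfh.src_eq]
  · have heE : e ∈ G.E := (hG.tgt_dom e).1 (by simp [htgt])
    have hv : v ∈ G.V ∪ G.E := Finset.mem_union_left _ (hG.tgt_mem e v htgt)
    grind [hfh.tgt_eq]

end Matchings

section Edits

variable [DecidableEq ι] [DecidableEq K] {G : PreGraph ι L K D}

theorem isPGraph_applyOp {op : EditOp ι L K D} (hG : IsPGraph G) (hap : Applicable op G) :
    IsPGraph (applyOp op G) := by
  obtain ⟨disj, src_dom, tgt_dom, src_mem, tgt_mem, lab_dom, prop_dom⟩ := hG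
  cases op <;> simp only [Applicable] at hap <;> constructor <;>
    simp only [applyOp] <;> intros <;> grind [Finset.disjoint_left]

theorem isExtensionBy_applyOp_insV {v : ι} {l : L} (hG : IsPGraph G)
    (hap : Applicable (.insV v l) G) : IsExtensionBy G (applyOp (.insV v l) G) v := by
  simp only [Applicable] at hap
  refine ⟨⟨hG, ?_, ?_, ?_, ?_, ?_⟩, rfl, hap, ?_⟩ <;> simp only [applyOp] <;> grind

theorem isExtensionBy_applyOp_insE {e v w : ι} {l : L} (hG : IsPGraph G)
    (hap : Applicable (.insE e v w l) G) : IsExtensionBy G (applyOp (.insE e v w l) G) e := by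
  simp only [Applicable] at hap
  refine ⟨⟨hG, ?_, ?_, ?_, ?_, ?_⟩, rfl, hap.2.2, ?_⟩ <;> simp only [applyOp] <;> grind

theorem isExtensionBy_applyOp_delV {v : ι} (hG : IsPGraph G)
    (hap : Applicable (.delV v) G) : IsExtensionBy (applyOp (.delV v) G) G v := by
  have hG' := isPGraph_applyOp hG hap
  simp only [Applicable] at hap
  refine ⟨⟨hG', ?_, ?_, ?_, ?_, ?_⟩, rfl, ?_, ?_⟩ <;> simp only [applyOp] <;>
    grind [Finset.disjoint_left, hG.disj]

theorem isExtensionBy_applyOp_delE {e : ι} (hG : IsPGraph G)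
    (hap : Applicable (.delE e) G) : IsExtensionBy (applyOp (.delE e) G) G e := by
  have hG' := isPGraph_applyOp hG hap
  simp only [Applicable] at hap
  refine ⟨⟨hG', ?_, ?_, ?_, ?_, ?_⟩, rfl, ?_, ?_⟩ <;> simp only [applyOp] <;>
    grind [Finset.disjoint_left, hG.disj]

end Edits

section Cost

variable [DecidableEq ι] [DecidableEq D] [Fintype K] {G G1 G2 : PreGraph ι L K D}

def matchCost (G1 G2 : PreGraph ι L K D) (h : ι → Option ι) (x : ι) : ℕ :=
  (h x).elim (propsOn G1 x + 1) (mismatchCount G1 G2 x)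

theorem pisoCost_eq_sum (h : ι → Option ι) :
    pisoCost G1 G2 h = ∑ x ∈ G1.V ∪ G1.E, matchCost G1 G2 h x +
      ∑ y ∈ unmatchedR G1 G2 h, (propsOn G2 y + 1) := by
  simp only [pisoCost, unmatchedL, Finset.card_eq_sum_ones, Finset.sum_filter, matchCost,
    Finset.sum_add_distrib]
  have : ∀ x, (h x).elim (propsOn G1 x + 1) (mismatchCount G1 G2 x) =
      (if h x = none then 1 else 0) + (h x).elim 0 (mismatchCount G1 G2 x) +
        (if h x = none then propsOn G1 x else 0) := by
    intro x; cases h x <;> simp [add_comm]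
  simp only [this, Finset.sum_add_distrib]
  ring

theorem pisoCost_restrictDom (h : ι → Option ι) :
    pisoCost G1 G2 (restrictDom G1 h) = pisoCost G1 G2 h := by
  have hdom : ∀ x ∈ G1.V ∪ G1.E, restrictDom G1 h x = h x := fun x hx => if_pos hx
  have hR : unmatchedR G1 G2 (restrictDom G1 h) = unmatchedR G1 G2 h :=
    Finset.filter_congr fun y _ => by grind
  rw [pisoCost_eq_sum, pisoCost_eq_sum, hR]
  congr 1
  exact Finset.sum_congr rfl fun x hx => by simp only [matchCost, hdom x hx]

theorem IsIso.pisoCost_restrictDom_eq_zero {f : ι → ι} (hf : IsIso G G2 f) :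
    pisoCost G G2 (restrictDom G (some ∘ f)) = 0 := by
  obtain ⟨hfh, g, hgh, hgf, hfg⟩ := hf
  have hmatch : ∀ x ∈ G.V ∪ G.E, mismatchCount G G2 x (f x) = 0 := fun x hx => by
    have hfx : f x ∈ G2.V ∪ G2.E := by grind [hfh.map_V, hfh.map_E]
    refine Finset.card_eq_zero.2 (Finset.filter_eq_empty_iff.2 fun k _ => not_not.2 ?_)
    refine Option.ext fun d => ⟨hfh.prop_eq x hx k d, fun hd => ?_⟩
    simpa [hgf x hx] using hgh.prop_eq (f x) hfx k d hd
  have hR : unmatchedR G G2 (some ∘ f) = ∅ := by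
    refine Finset.filter_eq_empty_iff.2 fun y hy hunm => hunm (g y) ?_ (by simp [hfg y hy])
    grind [hgh.map_V, hgh.map_E]
  rw [pisoCost_restrictDom, pisoCost_eq_sum, hR, Finset.sum_empty, add_zero]
  exact Finset.sum_eq_zero fun x hx => hmatch x hx

theorem pisoCost_le_pisoCost_withProp_add_one (h : ι → Option ι) {p : ι → K → Option D}
    (x₀ : ι) (k₀ : K) (hp : ∀ x k, ¬(x = x₀ ∧ k = k₀) → p x k = G.prop x k) :
    pisoCost G G2 h ≤ pisoCost { G with prop := p } G2 h + 1 := by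
  have hmatch : matchCost G G2 h x₀ ≤ matchCost { G with prop := p } G2 h x₀ + 1 := by
    unfold matchCost
    have hk : ∀ k, k ≠ k₀ → p x₀ k = G.prop x₀ k := fun k hne =>
      hp x₀ k fun h => hne h.2
    rcases h x₀ with _ | y
    · exact Nat.add_le_add_right
        (Finset.card_filter_le_card_filter_add_one k₀ fun k _ hne => by simp [hk k hne]) 1
    · exact Finset.card_filter_le_card_filter_add_one k₀ fun k _ hne => by simp [hk k hne]
  have hmatch_ne : ∀ x ∈ G.V ∪ G.E, x ≠ x₀ →
      matchCost G G2 h x ≤ matchCost { G with prop := p } G2 h x := fun x _ hx => by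
    have : p x = G.prop x := funext fun k => hp x k (fun h => hx h.1)
    unfold matchCost
    rcases h x <;> simp [propsOn, mismatchCount, this]
  have hR : unmatchedR { G with prop := p } G2 h = unmatchedR G G2 h := rfl
  rw [pisoCost_eq_sum, pisoCost_eq_sum, hR]
  have := Finset.sum_le_sum_add_one x₀ hmatch_ne hmatch
  dsimp only at this ⊢
  omega

namespace IsExtensionBy

variable {Gs Gb : PreGraph ι L K D} {z : ι}

theorem matchCost_eq (hA : IsExtensionBy Gs Gb z) (h : ι → Option ι) :
    matchCost Gb G2 h = matchCost Gs G2 h := by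
  unfold matchCost propsOn mismatchCount
  rw [hA.prop_eq]

theorem matchCost_self (hA : IsExtensionBy Gs Gb z) (h : ι → Option ι) :
    matchCost Gb G2 h z = (h z).elim 1 (propsOn G2) := by
  unfold matchCost
  rcases h z with _ | y <;> simp [propsOn, mismatchCount, hA.prop_eq_none,
    Option.isSome_iff_ne_none, @eq_comm _ none]

theorem pisoCost_eq (hA : IsExtensionBy Gs Gb z) (h : ι → Option ι) :
    pisoCost Gb G2 h = (h z).elim 1 (propsOn G2) + ∑ x ∈ Gs.V ∪ Gs.E, matchCost Gs G2 h x +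
      ∑ y ∈ unmatchedR Gb G2 h, (propsOn G2 y + 1) := by
  rw [pisoCost_eq_sum, hA.dom_eq, Finset.sum_insert hA.not_mem, hA.matchCost_self,
    hA.matchCost_eq]

theorem pisoCost_eq_add_one (hA : IsExtensionBy Gs Gb z) {h : ι → Option ι}
    (hz : h z = none) : pisoCost Gb G2 h = pisoCost Gs G2 h + 1 := by
  have hR : unmatchedR Gb G2 h = unmatchedR Gs G2 h := by
    ext y
    simp [hA.mem_unmatchedR_iff, hz]
  rw [hA.pisoCost_eq, hz, hR, pisoCost_eq_sum]
  simp only [Option.elim_none]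
  ring

theorem pisoCost_le_add_one (hA : IsExtensionBy Gs Gb z) (h : ι → Option ι) :
    pisoCost Gs G2 h ≤ pisoCost Gb G2 h + 1 := by
  rcases hz : h z with _ | y₀
  · have := hA.pisoCost_eq_add_one (G2 := G2) hz
    omega
  · have hR : unmatchedR Gs G2 h ⊆ insert y₀ (unmatchedR Gb G2 h) := fun y hy => by
      grind [hA.mem_unmatchedR_iff]
    have hy₀ : y₀ ∉ unmatchedR Gb G2 h := by simp [hA.mem_unmatchedR_iff, hz]
    have := Finset.sum_le_sum_of_subset (f := fun y => propsOn G2 y + 1) hR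
    rw [Finset.sum_insert hy₀] at this
    rw [hA.pisoCost_eq, hz, pisoCost_eq_sum]
    simp only [Option.elim_some]
    omega

end IsExtensionBy

end Cost

theorem exists_isPartialIso_pisoCost_le_applyOp
    [DecidableEq ι] [DecidableEq K] [DecidableEq D] [Fintype K] {G G2 : PreGraph ι L K D}
    {op : EditOp ι L K D} {h' : ι → Option ι} (hG : IsPGraph G) (hap : Applicable op G)
    (hp : IsPartialIso (applyOp op G) G2 h') :
    ∃ h, IsPartialIso G G2 h ∧ pisoCost G G2 h ≤ pisoCost (applyOp op G) G2 h' + 1 := by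
  have hG' := isPGraph_applyOp hG hap
  cases op with
  | insV v l =>
    have hA := isExtensionBy_applyOp_insV hG hap
    exact ⟨_, hp.restrict hA.isSubgraph hG',
      (pisoCost_restrictDom h').trans_le (hA.pisoCost_le_add_one h')⟩
  | insE e v w l =>
    have hA := isExtensionBy_applyOp_insE hG hap
    exact ⟨_, hp.restrict hA.isSubgraph hG',
      (pisoCost_restrictDom h').trans_le (hA.pisoCost_le_add_one h')⟩
  | delV v =>
    have hA := isExtensionBy_applyOp_delV hG hap
    exact ⟨h', hp.mono hA.isSubgraph hG,
      (hA.pisoCost_eq_add_one (hp.eq_none_of_notMem_s18 hA.not_mem)).le⟩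
  | delE e =>
    have hA := isExtensionBy_applyOp_delE hG hap
    exact ⟨h', hp.mono hA.isSubgraph hG,
      (hA.pisoCost_eq_add_one (hp.eq_none_of_notMem_s18 hA.not_mem)).le⟩
  | insP x k d =>
    exact ⟨h', hp, pisoCost_le_pisoCost_withProp_add_one h' x k fun _ _ hne => if_neg hne⟩
  | delP x k =>
    exact ⟨h', hp, pisoCost_le_pisoCost_withProp_add_one h' x k fun _ _ hne => if_neg hne⟩
  | updP x k d =>
    exact ⟨h', hp, pisoCost_le_pisoCost_withProp_add_one h' x k fun _ _ hne => if_neg hne⟩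

theorem canonical_script_gives_piso_general
    [DecidableEq ι] [DecidableEq K] [DecidableEq D] [Fintype K]
    (G1 G2 : PreGraph ι L K D) (hG1 : IsPGraph G1)
    (ops : List (EditOp ι L K D))
    (hvalid : ValidScript G1 ops)
    (hiso : ∃ f : ι → ι, IsIso (applyScript ops G1) G2 f) :
    ∃ h : ι → Option ι, IsPartialIso G1 G2 h ∧ pisoCost G1 G2 h ≤ ops.length := by
  induction hvalid with
  | nil =>
    obtain ⟨f, hf⟩ := hiso
    exact ⟨_, hf.isPartialIso_restrictDom hG1, hf.pisoCost_restrictDom_eq_zero.le⟩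
  | cons hap _ ih =>
    obtain ⟨h', hp', hcost'⟩ := ih (isPGraph_applyOp hG1 hap) hiso
    obtain ⟨h, hp, hcost⟩ := exists_isPartialIso_pisoCost_le_applyOp hG1 hap hp'
    exact ⟨h, hp, by rw [List.length_cons]; omega⟩

/-- from a canonical edit script taking `G1` to a graph
isomorphic to `G2` one can extract a partial isomorphism between `G1` and `G2`
whose cost is at most the length of the script. -/
theorem canonical_script_gives_piso
    [DecidableEq ι] [DecidableEq K] [DecidableEq D] [Fintype K]
    (G1 G2 : PreGraph ι L K D) (hG1 : IsPGraph G1) (hG2 : IsPGraph G2)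
    (ops : List (EditOp ι L K D)) (hcan : Canonical ops)
    (hvalid : ValidScript G1 ops)
    (hiso : ∃ f : ι → ι, IsIso (applyScript ops G1) G2 f) :
    ∃ h : ι → Option ι, IsPartialIso G1 G2 h ∧ pisoCost G1 G2 h ≤ ops.length :=
  canonical_script_gives_piso_general G1 G2 hG1 ops hvalid hiso
end
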